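/- arXiv:nlin/0206049 — 7 statements merged into one kernel-verified Lean document; each statement's English description precedes it below -/
import Mathlib

section
/- For an N-periodic dressing chain, the Schrödinger operator L_n = ∂_x² − u_n with u_n = v_n² − v̇_n and the N-th order operator M_n = (∂_x + v_{n+N−1})(∂_x + v_{n+N−2})⋯(∂_x + v_n) satisfy the operator identity [L_n, M_n] = α M_n; that is, for every smooth function φ : ℝ → ℝ, L_n(M_n φ) − M_n(L_n φ) = α · (M_n φ). -/
/-- The first-order operator ∂ₓ + w acting on functions. -/
noncomputable def dressingDOp (w : ℝ → ℝ) (φ : ℝ → ℝ) : ℝ → ℝ :=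
  fun x => deriv φ x + w x * φ x

/-- `dressingMOp v n k φ = (∂ₓ + v_{n+k-1}) ⋯ (∂ₓ + v_{n+1})(∂ₓ + v_n) φ`. -/
noncomputable def dressingMOp (v : ℤ → ℝ → ℝ) (n : ℤ) : ℕ → (ℝ → ℝ) → (ℝ → ℝ)
  | 0 => fun φ => φ
  | k + 1 => fun φ => dressingDOp (v (n + (k : ℤ))) (dressingMOp v n k φ)

/-- The Schrödinger operator L_n = ∂ₓ² - u_n with u_n = v_n² - v̇_n. -/
noncomputable def dressingLOp (v : ℤ → ℝ → ℝ) (n : ℤ) (φ : ℝ → ℝ) : ℝ → ℝ :=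
  fun x => deriv (deriv φ) x - ((v n x) ^ 2 - deriv (v n) x) * φ x

section Aux

private lemma cd_deriv {f : ℝ → ℝ} (hf : ContDiff ℝ (⊤ : ℕ∞) f) : ContDiff ℝ (⊤ : ℕ∞) (deriv f) :=
  (contDiff_infty_iff_deriv.mp hf).2

private lemma cd_diffAt {f : ℝ → ℝ} (hf : ContDiff ℝ (⊤ : ℕ∞) f) (x : ℝ) : DifferentiableAt ℝ f x :=
  (hf.differentiable (by simp)) x

private lemma dressingDOp_contDiff {w φ : ℝ → ℝ} (hw : ContDiff ℝ (⊤ : ℕ∞) w) (hφ : ContDiff ℝ (⊤ : ℕ∞) φ) :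
    ContDiff ℝ (⊤ : ℕ∞) (dressingDOp w φ) := by
  unfold dressingDOp
  exact (cd_deriv hφ).add (hw.mul hφ)

private lemma dressingMOp_contDiff (v : ℤ → ℝ → ℝ) (n : ℤ) (hsmooth : ∀ m, ContDiff ℝ (⊤ : ℕ∞) (v m))
    {φ : ℝ → ℝ} (hφ : ContDiff ℝ (⊤ : ℕ∞) φ) : ∀ k, ContDiff ℝ (⊤ : ℕ∞) (dressingMOp v n k φ)
  | 0 => hφ
  | k + 1 => dressingDOp_contDiff (hsmooth _) (dressingMOp_contDiff v n hsmooth hφ k)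

private lemma dressingLOp_contDiff (v : ℤ → ℝ → ℝ) (m : ℤ) (hsmooth : ∀ m, ContDiff ℝ (⊤ : ℕ∞) (v m))
    {φ : ℝ → ℝ} (hφ : ContDiff ℝ (⊤ : ℕ∞) φ) : ContDiff ℝ (⊤ : ℕ∞) (dressingLOp v m φ) := by
  unfold dressingLOp
  exact (cd_deriv (cd_deriv hφ)).sub
    ((((hsmooth m).pow 2).sub (cd_deriv (hsmooth m))).mul hφ)

/-- Expansion of the derivative of `dressingDOp w φ`. -/
private lemma deriv_dressingDOp {w φ : ℝ → ℝ} (hw : ContDiff ℝ (⊤ : ℕ∞) w) (hφ : ContDiff ℝ (⊤ : ℕ∞) φ) :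
    deriv (dressingDOp w φ)
      = fun x => deriv (deriv φ) x + (deriv w x * φ x + w x * deriv φ x) := by
  funext x
  unfold dressingDOp
  rw [deriv_fun_add (cd_diffAt (cd_deriv hφ) x) ((cd_diffAt hw x).fun_mul (cd_diffAt hφ x)),
      deriv_fun_mul (cd_diffAt hw x) (cd_diffAt hφ x)]

/-- Linearity: `dressingDOp w (f - c • g) = dressingDOp w f - c * dressingDOp w g`. -/
private lemma dressingDOp_sub_smul {w f g : ℝ → ℝ} (hf : ContDiff ℝ (⊤ : ℕ∞) f) (hg : ContDiff ℝ (⊤ : ℕ∞) g)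
    (c : ℝ) (x : ℝ) :
    dressingDOp w (fun y => f y - c * g y) x = dressingDOp w f x - c * dressingDOp w g x := by
  unfold dressingDOp
  have h1 : deriv (fun y => f y - c * g y) x = deriv f x - c * deriv g x := by
    rw [deriv_fun_sub (cd_diffAt hf x) ((cd_diffAt hg x).const_mul c), deriv_const_mul c (cd_diffAt hg x)]
  rw [h1]; ring

/-- The key one-step intertwining identity. -/
private lemma intertwine (v : ℤ → ℝ → ℝ) (α : ℤ → ℝ) (hsmooth : ∀ m, ContDiff ℝ (⊤ : ℕ∞) (v m))
    (hchain : ∀ (m : ℤ) (x : ℝ),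
      deriv (v m) x + deriv (v (m + 1)) x = (v (m + 1) x) ^ 2 - (v m x) ^ 2 + α m)
    (m : ℤ) {ψ : ℝ → ℝ} (hψ : ContDiff ℝ (⊤ : ℕ∞) ψ) (x : ℝ) :
    dressingDOp (v m) (dressingLOp v m ψ) x
      = dressingLOp v (m + 1) (dressingDOp (v m) ψ) x - α m * dressingDOp (v m) ψ x := by
  have hw := hsmooth m
  have hw' := cd_deriv hw
  have hψ' := cd_deriv hψ
  have hψ'' := cd_deriv hψ'
  -- derivative of L_m ψ
  have hLd : deriv (dressingLOp v m ψ) x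
      = deriv (deriv (deriv ψ)) x -
        ((2 * v m x ^ 1 * deriv (v m) x - deriv (deriv (v m)) x) * ψ x
          + (v m x ^ 2 - deriv (v m) x) * deriv ψ x) := by
    unfold dressingLOp
    rw [deriv_fun_sub (cd_diffAt hψ'' x)
        ((((cd_diffAt hw x).fun_pow 2).fun_sub (cd_diffAt hw' x)).fun_mul (cd_diffAt hψ x)),
      deriv_fun_mul (((cd_diffAt hw x).fun_pow 2).fun_sub (cd_diffAt hw' x)) (cd_diffAt hψ x),
      deriv_fun_sub ((cd_diffAt hw x).fun_pow 2) (cd_diffAt hw' x),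
      deriv_fun_pow (cd_diffAt hw x) 2]
    push_cast
    ring
  -- derivative of A_m ψ (as a function)
  have hAd := deriv_dressingDOp hw hψ
  -- second derivative of A_m ψ
  have hAdd : deriv (deriv (dressingDOp (v m) ψ)) x
      = deriv (deriv (deriv ψ)) x
        + (deriv (deriv (v m)) x * ψ x + deriv (v m) x * deriv ψ x)
        + (deriv (v m) x * deriv ψ x + v m x * deriv (deriv ψ) x) := by
    rw [hAd]
    rw [deriv_fun_add (cd_diffAt hψ'' x)
        (((cd_diffAt hw' x).fun_mul (cd_diffAt hψ x)).fun_add ((cd_diffAt hw x).fun_mul (cd_diffAt hψ' x))),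
      deriv_fun_add ((cd_diffAt hw' x).fun_mul (cd_diffAt hψ x)) ((cd_diffAt hw x).fun_mul (cd_diffAt hψ' x)),
      deriv_fun_mul (cd_diffAt hw' x) (cd_diffAt hψ x),
      deriv_fun_mul (cd_diffAt hw x) (cd_diffAt hψ' x)]
    ring
  have hc := hchain m x
  have hAx : dressingDOp (v m) ψ x = deriv ψ x + v m x * ψ x := rfl
  have hAdx : deriv (dressingDOp (v m) ψ) x
      = deriv (deriv ψ) x + (deriv (v m) x * ψ x + v m x * deriv ψ x) := by rw [hAd]
  show deriv (dressingLOp v m ψ) x + v m x * dressingLOp v m ψ x = _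
  rw [hLd]
  unfold dressingLOp
  rw [hAdd, hAx]
  have hder1 : deriv (v (m + 1)) x
      = (v (m + 1) x) ^ 2 - (v m x) ^ 2 + α m - deriv (v m) x := by linarith
  rw [hder1]
  ring

/-- Sum of `α` over a window of length `N` is independent of the starting point. -/
private lemma sum_window (N : ℕ) (α : ℤ → ℝ) (hαper : ∀ n : ℤ, α (n + (N : ℤ)) = α n) :
    ∀ a : ℤ, (∑ j ∈ Finset.range N, α (a + (j : ℤ))) = ∑ j ∈ Finset.range N, α ((j : ℤ)) := by
  have hshift : ∀ a : ℤ, (∑ j ∈ Finset.range N, α ((a + 1) + (j : ℤ)))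
      = ∑ j ∈ Finset.range N, α (a + (j : ℤ)) := by
    intro a
    have h1 : (∑ j ∈ Finset.range N, α ((a + 1) + (j : ℤ)))
        = ∑ j ∈ Finset.range N, (fun i : ℕ => α (a + (i : ℤ))) (j + 1) := by
      refine Finset.sum_congr rfl fun j _ => ?_
      congr 1
      push_cast
      ring
    have h2 := Finset.sum_range_succ' (fun i : ℕ => α (a + (i : ℤ))) N
    have h3 := Finset.sum_range_succ (fun i : ℕ => α (a + (i : ℤ))) N
    have h4 : α (a + (N : ℤ)) = α a := hαper a
    rw [h1]
    have : (∑ j ∈ Finset.range N, (fun i : ℕ => α (a + (i : ℤ))) (j + 1))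
        = (∑ i ∈ Finset.range (N + 1), (fun i : ℕ => α (a + (i : ℤ))) i)
          - (fun i : ℕ => α (a + (i : ℤ))) 0 := by
      rw [h2]; ring
    rw [this, h3]
    simp only []
    push_cast
    rw [h4]
    simp
  intro a
  induction a using Int.induction_on with
  | zero => simp
  | succ k ih => rw [hshift k, ih]
  | pred k ih =>
      have := hshift (-(k : ℤ) - 1)
      simp only [sub_add_cancel] at this
      rw [← this]
      exact ih

/-- Main induction: `M_k L_n = (L_{n+k} - Σ_{j<k} α_{n+j}) M_k`. -/
private lemma key_induction (v : ℤ → ℝ → ℝ) (α : ℤ → ℝ) (hsmooth : ∀ m, ContDiff ℝ (⊤ : ℕ∞) (v m))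
    (hchain : ∀ (m : ℤ) (x : ℝ),
      deriv (v m) x + deriv (v (m + 1)) x = (v (m + 1) x) ^ 2 - (v m x) ^ 2 + α m)
    (n : ℤ) {φ : ℝ → ℝ} (hφ : ContDiff ℝ (⊤ : ℕ∞) φ) :
    ∀ k : ℕ, dressingMOp v n k (dressingLOp v n φ)
      = fun x => dressingLOp v (n + (k : ℤ)) (dressingMOp v n k φ) x
          - (∑ j ∈ Finset.range k, α (n + (j : ℤ))) * dressingMOp v n k φ x := by
  intro k
  induction k with
  | zero =>
      funext x
      simp [dressingMOp]
  | succ k ih =>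
      have hM := dressingMOp_contDiff v n hsmooth hφ k
      have hLM := dressingLOp_contDiff v (n + (k : ℤ)) hsmooth hM
      funext x
      show dressingDOp (v (n + (k : ℤ))) (dressingMOp v n k (dressingLOp v n φ)) x = _
      rw [ih, dressingDOp_sub_smul hLM hM]
      rw [intertwine v α hsmooth hchain (n + (k : ℤ)) hM x]
      have hcast : n + ((k : ℕ) + 1 : ℤ) = (n + (k : ℤ)) + 1 := by ring
      have hMsucc : dressingMOp v n (k + 1) φ = dressingDOp (v (n + (k : ℤ))) (dressingMOp v n k φ) := rfl
      rw [Finset.sum_range_succ]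
      push_cast
      rw [hMsucc, show n + ((k : ℤ) + 1) = (n + (k : ℤ)) + 1 by ring]
      ring

end Aux

/-- For an N-periodic dressing chain, [L_n, M_n] = α M_n. -/
theorem dressing_chain_string_equation (N : ℕ) (hN : 3 ≤ N)
    (v : ℤ → ℝ → ℝ) (α : ℤ → ℝ)
    (hsmooth : ∀ n : ℤ, ContDiff ℝ (⊤ : ℕ∞) (v n))
    (hvper : ∀ n : ℤ, v (n + (N : ℤ)) = v n)
    (hαper : ∀ n : ℤ, α (n + (N : ℤ)) = α n)
    (hchain : ∀ (n : ℤ) (x : ℝ),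
      deriv (v n) x + deriv (v (n + 1)) x = (v (n + 1) x) ^ 2 - (v n x) ^ 2 + α n)
    (n : ℤ) (φ : ℝ → ℝ) (hφ : ContDiff ℝ (⊤ : ℕ∞) φ) (x : ℝ) :
    dressingLOp v n (dressingMOp v n N φ) x - dressingMOp v n N (dressingLOp v n φ) x
      = (∑ k ∈ Finset.range N, α ((k : ℤ) + 1)) * dressingMOp v n N φ x := by
  have hsmooth' : ∀ m, ContDiff ℝ (⊤ : ℕ∞) (v m) := fun m => (hsmooth m).of_le (by simp)
  have hφ' : ContDiff ℝ (⊤ : ℕ∞) φ := hφ.of_le (by simp)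
  have hkey := congrFun (key_induction v α hsmooth' hchain n hφ' N) x
  have hLper : dressingLOp v (n + (N : ℤ)) (dressingMOp v n N φ)
      = dressingLOp v n (dressingMOp v n N φ) := by
    unfold dressingLOp
    rw [hvper n]
  rw [hLper] at hkey
  have hsum : (∑ j ∈ Finset.range N, α (n + (j : ℤ))) = ∑ k ∈ Finset.range N, α ((k : ℤ) + 1) := by
    rw [sum_window N α hαper n, ← sum_window N α hαper 1]
    refine Finset.sum_congr rfl fun j _ => ?_
    rw [add_comm]
  rw [hkey, hsum]
  ring
end

section
/- For an N-periodic dressing chain with N = 2g + 1 odd, the functions f_n = v_{n+1} + v_n satisfy the Noumi–Yamada system of type A^{(1)}_{2g}: for every n, ḟ_n = f_n ( Σ_{k=1}^{g} f_{n+2k−1} − Σ_{k=1}^{g} f_{n+2k} ) + α_n. -/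
lemma dressing_tele (v f : ℤ → ℝ → ℝ)
    (hf : ∀ (n : ℤ) (x : ℝ), f n x = v (n + 1) x + v n x) (n : ℤ) (x : ℝ) :
    ∀ g : ℕ, (∑ k ∈ Finset.Icc 1 g, (f (n + (2 * (k : ℤ) - 1)) x - f (n + 2 * (k : ℤ)) x))
      = v (n + 1) x - v (n + 2 * (g : ℤ) + 1) x := by
  intro g
  induction g with
  | zero => simp
  | succ m ih =>
    rw [Finset.sum_Icc_succ_top (by omega : 1 ≤ m + 1), ih, hf, hf]
    push_cast
    ring_nf

/-- For an N-periodic dressing chain with N = 2g+1 odd, the functions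
f_n = v_{n+1} + v_n satisfy the Noumi–Yamada system of type A^{(1)}_{2g}. -/
theorem dressing_chain_odd_noumi_yamada (g : ℕ) (hg : 1 ≤ g)
    (v f : ℤ → ℝ → ℝ) (α : ℤ → ℝ)
    (hsmooth : ∀ n : ℤ, ContDiff ℝ (⊤ : ℕ∞) (v n))
    (hvper : ∀ n : ℤ, v (n + ((2 * g + 1 : ℕ) : ℤ)) = v n)
    (hαper : ∀ n : ℤ, α (n + ((2 * g + 1 : ℕ) : ℤ)) = α n)
    (hchain : ∀ (n : ℤ) (x : ℝ),
      deriv (v n) x + deriv (v (n + 1)) x = (v (n + 1) x) ^ 2 - (v n x) ^ 2 + α n)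
    (hf : ∀ (n : ℤ) (x : ℝ), f n x = v (n + 1) x + v n x) :
    ∀ (n : ℤ) (x : ℝ),
      deriv (f n) x
        = f n x * ((∑ k ∈ Finset.Icc 1 g, f (n + (2 * (k : ℤ) - 1)) x)
            - ∑ k ∈ Finset.Icc 1 g, f (n + 2 * (k : ℤ)) x) + α n := by
  intro n x
  have hfn : f n = fun y => v (n + 1) y + v n y := by
    funext y; rw [hf]
  have hd : ∀ m : ℤ, DifferentiableAt ℝ (v m) x := fun m =>
    ((hsmooth m).differentiable (by simp)).differentiableAt
  have hderiv : deriv (f n) x = deriv (v n) x + deriv (v (n + 1)) x := by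
    rw [hfn, deriv_fun_add (hd _) (hd _)]; ring
  have hsum : (∑ k ∈ Finset.Icc 1 g, f (n + (2 * (k : ℤ) - 1)) x)
      - ∑ k ∈ Finset.Icc 1 g, f (n + 2 * (k : ℤ)) x
      = v (n + 1) x - v n x := by
    rw [← Finset.sum_sub_distrib, dressing_tele v f hf n x g]
    have := congrFun (hvper n) x
    push_cast at this
    rw [show n + 2 * (g : ℤ) + 1 = n + (2 * (g : ℤ) + 1) by ring, this]
  rw [hderiv, hchain, hsum, hf]
  ring
end

section
/- For an N-periodic dressing chain with N = 2g + 2 even, the functions f_n = v_{n+1} + v_n satisfy, for every n, the equation v · ḟ_n = f_n ( Σ_{1≤j≤k≤g} f_{n+2j−1} f_{n+2k} − Σ_{1≤j≤k≤g} f_{n+2j} f_{n+2k+1} ) + ( Σ_{k=1}^{g+1} α_{n+2k−1} − α/2 ) f_n + α_n v, where v = Σ_{n=1}^N v_n and α = Σ_{n=1}^N α_n. -/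
lemma DC.tele (w : ℤ → ℝ) (N : ℕ) (a : ℤ) :
    ∑ m ∈ Finset.range N, w (a + (m:ℤ) + 1)
      = ∑ m ∈ Finset.range N, w (a + (m:ℤ)) - w a + w (a + (N:ℤ)) := by
  induction N with
  | zero => simp
  | succ N ih =>
    rw [Finset.sum_range_succ, Finset.sum_range_succ, ih]
    push_cast
    have h1 : a + (N:ℤ) + 1 = a + ((N:ℤ) + 1) := by ring
    rw [h1]
    ring

lemma DC.shift_sum (w : ℤ → ℝ) (N : ℕ) (hper : ∀ c : ℤ, w (c + (N:ℤ)) = w c) (a b : ℤ) :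
    ∑ m ∈ Finset.range N, w (a + (m:ℤ)) = ∑ m ∈ Finset.range N, w (b + (m:ℤ)) := by
  have step : ∀ c : ℤ, (∑ m ∈ Finset.range N, w (c + 1 + (m:ℤ)))
      = ∑ m ∈ Finset.range N, w (c + (m:ℤ)) := by
    intro c
    have := DC.tele w N c
    calc ∑ m ∈ Finset.range N, w (c + 1 + (m:ℤ))
        = ∑ m ∈ Finset.range N, w (c + (m:ℤ) + 1) :=
          Finset.sum_congr rfl (fun m _ => by rw [show c + 1 + (m:ℤ) = c + (m:ℤ) + 1 by ring])
      _ = ∑ m ∈ Finset.range N, w (c + (m:ℤ)) - w c + w (c + (N:ℤ)) := this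
      _ = ∑ m ∈ Finset.range N, w (c + (m:ℤ)) := by rw [hper c]; ring
  have all : ∀ c : ℤ, (∑ m ∈ Finset.range N, w (c + (m:ℤ)))
      = ∑ m ∈ Finset.range N, w ((m:ℤ)) := by
    intro c
    induction c using Int.induction_on with
    | zero => simp
    | succ i ih => rw [step (i:ℤ)] at *; exact ih
    | pred i ih =>
      have hs := step (-(i:ℤ) - 1)
      rw [Finset.sum_congr rfl
        (fun m _ => by rw [show -(i:ℤ) - 1 + 1 + (m:ℤ) = -(i:ℤ) + (m:ℤ) by ring])] at hs
      rw [← hs]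
      exact ih
  rw [all a, all b]


lemma DC.cover (w : ℤ → ℝ) (g : ℕ) :
    ∑ k ∈ Finset.Icc 1 (g+1), (w (2*(k:ℤ) - 1) + w (2*(k:ℤ)))
      = ∑ m ∈ Finset.range (2*g+2), w ((m:ℤ)+1) := by
  induction g with
  | zero => norm_num [Finset.sum_range_succ]
  | succ g ih =>
    rw [Finset.sum_Icc_succ_top (by omega : (1:ℕ) ≤ g+1+1)]
    rw [show 2*(g+1)+2 = (2*g+2)+1+1 from by ring, Finset.sum_range_succ,
      Finset.sum_range_succ, ih]
    push_cast
    rw [show 2*((g:ℤ)+1+1) - 1 = 2*(g:ℤ)+2+1 by ring, show 2*((g:ℤ)+1+1) = 2*(g:ℤ)+3+1 by ring]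
    ring

lemma DC.cover2 (w : ℤ → ℝ) (g : ℕ) :
    ∑ k ∈ Finset.Icc 1 (g+1), (w (2*(k:ℤ)+1) + w (2*(k:ℤ)))
      = (∑ m ∈ Finset.range (2*g+2), w ((m:ℤ)+1)) - w 1 + w (2*(g:ℤ)+3) := by
  induction g with
  | zero => norm_num [Finset.sum_range_succ]; ring
  | succ g ih =>
    rw [Finset.sum_Icc_succ_top (by omega : (1:ℕ) ≤ g+1+1)]
    rw [show 2*(g+1)+2 = (2*g+2)+1+1 from by ring, Finset.sum_range_succ,
      Finset.sum_range_succ, ih]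
    push_cast
    rw [show 2*((g:ℤ)+1+1)+1 = 2*(g:ℤ)+5 by ring, show 2*((g:ℤ)+1+1) = 2*(g:ℤ)+4 by ring,
      show 2*((g:ℤ)+1)+3 = 2*(g:ℤ)+5 by ring, show 2*(g:ℤ)+2+1 = 2*(g:ℤ)+3 by ring,
      show 2*(g:ℤ)+3+1 = 2*(g:ℤ)+4 by ring]
    ring

lemma DC.key (g : ℕ) (u : ℤ → ℝ) :
    (u 1 - u 0) * (∑ m ∈ Finset.range (2*g+2), u ((m:ℤ)+1))
      + ∑ k ∈ Finset.Icc 1 (g+1), ((u (2*(k:ℤ)))^2 - (u (2*(k:ℤ)-1))^2)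
    = ((∑ j ∈ Finset.Icc 1 g, ∑ k ∈ Finset.Icc j g,
          (u (2*(j:ℤ)) + u (2*(j:ℤ)-1)) * (u (2*(k:ℤ)+1) + u (2*(k:ℤ))))
        - ∑ j ∈ Finset.Icc 1 g, ∑ k ∈ Finset.Icc j g,
          (u (2*(j:ℤ)+1) + u (2*(j:ℤ))) * (u (2*(k:ℤ)+2) + u (2*(k:ℤ)+1)))
      + (u (2*(g:ℤ)+2) - u 0) * (∑ m ∈ Finset.range (2*g+2), u ((m:ℤ)+1)) := by
  induction g with
  | zero => norm_num [Finset.sum_range_succ]; ring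
  | succ g ih =>
    have split : ∀ F : ℕ → ℕ → ℝ,
        ∑ j ∈ Finset.Icc 1 (g+1), ∑ k ∈ Finset.Icc j (g+1), F j k
        = (∑ j ∈ Finset.Icc 1 g, ∑ k ∈ Finset.Icc j g, F j k)
          + ∑ j ∈ Finset.Icc 1 (g+1), F j (g+1) := by
      intro F
      have h1 : ∀ j ∈ Finset.Icc 1 (g+1),
          ∑ k ∈ Finset.Icc j (g+1), F j k = (∑ k ∈ Finset.Icc j g, F j k) + F j (g+1) :=
        fun j hj => Finset.sum_Icc_succ_top (Finset.mem_Icc.mp hj).2 _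
      rw [Finset.sum_congr rfl h1, Finset.sum_add_distrib,
        Finset.sum_Icc_succ_top (by omega : (1:ℕ) ≤ g+1)]
      rw [Finset.Icc_eq_empty (by omega : ¬ (g+1:ℕ) ≤ g)]
      simp
    rw [split (fun j k => (u (2*(j:ℤ)) + u (2*(j:ℤ)-1)) * (u (2*(k:ℤ)+1) + u (2*(k:ℤ)))),
      split (fun j k => (u (2*(j:ℤ)+1) + u (2*(j:ℤ))) * (u (2*(k:ℤ)+2) + u (2*(k:ℤ)+1)))]
    have e1 : ∑ j ∈ Finset.Icc 1 (g+1),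
        (u (2*(j:ℤ)) + u (2*(j:ℤ)-1)) * (u (2*((g+1:ℕ):ℤ)+1) + u (2*((g+1:ℕ):ℤ)))
        = (∑ m ∈ Finset.range (2*g+2), u ((m:ℤ)+1)) * (u (2*((g+1:ℕ):ℤ)+1) + u (2*((g+1:ℕ):ℤ))) := by
      rw [← Finset.sum_mul, ← DC.cover u g]
      exact congrArg (· * _) (Finset.sum_congr rfl (fun j _ => add_comm _ _))
    have e2 : ∑ j ∈ Finset.Icc 1 (g+1),
        (u (2*(j:ℤ)+1) + u (2*(j:ℤ))) * (u (2*((g+1:ℕ):ℤ)+2) + u (2*((g+1:ℕ):ℤ)+1))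
        = ((∑ m ∈ Finset.range (2*g+2), u ((m:ℤ)+1)) - u 1 + u (2*(g:ℤ)+3))
            * (u (2*((g+1:ℕ):ℤ)+2) + u (2*((g+1:ℕ):ℤ)+1)) := by
      rw [← Finset.sum_mul, DC.cover2 u g]
    rw [e1, e2]
    rw [Finset.sum_Icc_succ_top (by omega : (1:ℕ) ≤ g+1+1)]
    rw [show 2*(g+1)+2 = (2*g+2)+1+1 from by ring, Finset.sum_range_succ, Finset.sum_range_succ]
    push_cast
    rw [show (2*(g:ℤ)+2+1) = 2*(g:ℤ)+3 by ring, show (2*(g:ℤ)+3+1) = 2*(g:ℤ)+4 by ring,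
      show (2*((g:ℤ)+1+1)-1) = 2*(g:ℤ)+3 by ring, show (2*((g:ℤ)+1+1)) = 2*(g:ℤ)+4 by ring,
      show (2*((g:ℤ)+1)+1) = 2*(g:ℤ)+3 by ring, show (2*((g:ℤ)+1)+2) = 2*(g:ℤ)+4 by ring,
      show (2*((g:ℤ)+1)) = 2*(g:ℤ)+2 by ring]
    linear_combination ih


/-- For an N-periodic dressing chain with N = 2g+2 even, the functions
f_n = v_{n+1} + v_n satisfy the Noumi–Yamada-type equation
v·ḟ_n = f_n (Σ_{1≤j≤k≤g} f_{n+2j−1} f_{n+2k} − Σ_{1≤j≤k≤g} f_{n+2j} f_{n+2k+1})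
        + (Σ_{k=1}^{g+1} α_{n+2k−1} − α/2) f_n + α_n v. -/
theorem dressing_chain_even_noumi_yamada (g : ℕ) (hg : 1 ≤ g)
    (v f : ℤ → ℝ → ℝ) (α : ℤ → ℝ)
    (hsmooth : ∀ n : ℤ, ContDiff ℝ (⊤ : ℕ∞) (v n))
    (hvper : ∀ n : ℤ, v (n + ((2 * g + 2 : ℕ) : ℤ)) = v n)
    (hαper : ∀ n : ℤ, α (n + ((2 * g + 2 : ℕ) : ℤ)) = α n)
    (hchain : ∀ (n : ℤ) (x : ℝ),
      deriv (v n) x + deriv (v (n + 1)) x = (v (n + 1) x) ^ 2 - (v n x) ^ 2 + α n)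
    (hf : ∀ (n : ℤ) (x : ℝ), f n x = v (n + 1) x + v n x) :
    ∀ (n : ℤ) (x : ℝ),
      (∑ m ∈ Finset.range (2 * g + 2), v ((m : ℤ) + 1) x) * deriv (f n) x
        = f n x * ((∑ j ∈ Finset.Icc 1 g, ∑ k ∈ Finset.Icc j g,
              f (n + (2 * (j : ℤ) - 1)) x * f (n + 2 * (k : ℤ)) x)
            - ∑ j ∈ Finset.Icc 1 g, ∑ k ∈ Finset.Icc j g,
              f (n + 2 * (j : ℤ)) x * f (n + (2 * (k : ℤ) + 1)) x)
          + ((∑ k ∈ Finset.Icc 1 (g + 1), α (n + (2 * (k : ℤ) - 1)))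
              - (∑ m ∈ Finset.range (2 * g + 2), α ((m : ℤ) + 1)) / 2) * f n x
          + α n * (∑ m ∈ Finset.range (2 * g + 2), v ((m : ℤ) + 1) x) := by
  intro n x
  have hd : ∀ m : ℤ, DifferentiableAt ℝ (v m) x :=
    fun m => ((hsmooth m).differentiable (by simp)).differentiableAt
  have hα_each : ∀ m : ℤ,
      α m = deriv (v m) x + deriv (v (m+1)) x - (v (m+1) x)^2 + (v m x)^2 :=
    fun m => by have := hchain m x; linarith
  have hderiv_f : deriv (f n) x = (v (n+1) x)^2 - (v n x)^2 + α n := by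
    rw [funext (hf n), deriv_fun_add (hd (n+1)) (hd n)]
    have := hchain n x; linarith
  -- shift of the v-sum
  have hV : (∑ m ∈ Finset.range (2*g+2), v ((m:ℤ)+1) x)
      = ∑ m ∈ Finset.range (2*g+2), v (n + ((m:ℤ)+1)) x := by
    calc ∑ m ∈ Finset.range (2*g+2), v ((m:ℤ)+1) x
        = ∑ m ∈ Finset.range (2*g+2), (fun i => v i x) (1 + (m:ℤ)) :=
          Finset.sum_congr rfl (fun m _ => by
            show v ((m:ℤ)+1) x = v (1 + (m:ℤ)) x
            rw [show ((m:ℤ)+1) = 1 + (m:ℤ) by ring])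
      _ = ∑ m ∈ Finset.range (2*g+2), (fun i => v i x) ((n+1) + (m:ℤ)) :=
          DC.shift_sum (fun i => v i x) (2*g+2) (fun c => congrFun (hvper c) x) 1 (n+1)
      _ = ∑ m ∈ Finset.range (2*g+2), v (n + ((m:ℤ)+1)) x :=
          Finset.sum_congr rfl (fun m _ => by
            show v (n+1+(m:ℤ)) x = v (n + ((m:ℤ)+1)) x
            rw [show (n+1+(m:ℤ)) = n + ((m:ℤ)+1) by ring])
  -- total of α equals twice sum of derivatives
  have hαtot : (∑ m ∈ Finset.range (2*g+2), α ((m:ℤ)+1))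
      = 2 * ∑ m ∈ Finset.range (2*g+2), deriv (v (n + ((m:ℤ)+1))) x := by
    have hshift : (∑ m ∈ Finset.range (2*g+2), α ((m:ℤ)+1))
        = ∑ m ∈ Finset.range (2*g+2), α (n+1+(m:ℤ)) := by
      calc ∑ m ∈ Finset.range (2*g+2), α ((m:ℤ)+1)
          = ∑ m ∈ Finset.range (2*g+2), α (1 + (m:ℤ)) :=
            Finset.sum_congr rfl (fun m _ => by rw [show ((m:ℤ)+1) = 1 + (m:ℤ) by ring])
        _ = ∑ m ∈ Finset.range (2*g+2), α ((n+1) + (m:ℤ)) :=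
            DC.shift_sum α _ (fun c => hαper c) 1 (n+1)
    have hexp : (∑ m ∈ Finset.range (2*g+2), α (n+1+(m:ℤ)))
        = (∑ m ∈ Finset.range (2*g+2), deriv (v (n+1+(m:ℤ))) x)
          + (∑ m ∈ Finset.range (2*g+2), deriv (v (n+1+(m:ℤ)+1)) x)
          - (∑ m ∈ Finset.range (2*g+2), (v (n+1+(m:ℤ)+1) x)^2)
          + (∑ m ∈ Finset.range (2*g+2), (v (n+1+(m:ℤ)) x)^2) := by
      rw [Finset.sum_congr rfl (fun m (_ : m ∈ Finset.range (2*g+2)) => hα_each (n+1+(m:ℤ)))]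
      rw [Finset.sum_add_distrib, Finset.sum_sub_distrib, Finset.sum_add_distrib]
    have t1 : (∑ m ∈ Finset.range (2*g+2), deriv (v (n+1+(m:ℤ)+1)) x)
        = (∑ m ∈ Finset.range (2*g+2), deriv (v (n+1+(m:ℤ))) x)
          - deriv (v (n+1)) x + deriv (v (n+1+((2*g+2:ℕ):ℤ))) x :=
      DC.tele (fun i => deriv (v i) x) (2*g+2) (n+1)
    have t2 : (∑ m ∈ Finset.range (2*g+2), (v (n+1+(m:ℤ)+1) x)^2)
        = (∑ m ∈ Finset.range (2*g+2), (v (n+1+(m:ℤ)) x)^2)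
          - (v (n+1) x)^2 + (v (n+1+((2*g+2:ℕ):ℤ)) x)^2 :=
      DC.tele (fun i => (v i x)^2) (2*g+2) (n+1)
    rw [hvper (n+1)] at t1 t2
    have harg : (∑ m ∈ Finset.range (2*g+2), deriv (v (n+1+(m:ℤ))) x)
        = ∑ m ∈ Finset.range (2*g+2), deriv (v (n + ((m:ℤ)+1))) x :=
      Finset.sum_congr rfl (fun m _ => by
        rw [show (n+1+(m:ℤ)) = n + ((m:ℤ)+1) by ring])
    rw [hshift, hexp, t1, t2, harg]
    ring
  -- the odd-α sum
  have hSα : (∑ k ∈ Finset.Icc 1 (g+1), α (n + (2*(k:ℤ)-1)))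
      = (∑ m ∈ Finset.range (2*g+2), deriv (v (n + ((m:ℤ)+1))) x)
        - ∑ k ∈ Finset.Icc 1 (g+1),
            ((v (n + 2*(k:ℤ)) x)^2 - (v (n + (2*(k:ℤ)-1)) x)^2) := by
    have hexp : ∀ k ∈ Finset.Icc 1 (g+1), α (n + (2*(k:ℤ)-1))
        = (deriv (v (n + (2*(k:ℤ)-1))) x + deriv (v (n + 2*(k:ℤ))) x)
          - ((v (n + 2*(k:ℤ)) x)^2 - (v (n + (2*(k:ℤ)-1)) x)^2) := by
      intro k _
      have h := hα_each (n + (2*(k:ℤ)-1))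
      rw [show n + (2*(k:ℤ)-1) + 1 = n + 2*(k:ℤ) by ring] at h
      linarith
    rw [Finset.sum_congr rfl hexp, Finset.sum_sub_distrib]
    congr 1
    exact DC.cover (fun i => deriv (v (n + i)) x) g
  -- key algebraic identity
  have hkey := DC.key g (fun i => v (n + i) x)
  simp only [add_zero] at hkey
  have hwrap : v (n + (2*(g:ℤ)+2)) = v n := by
    have h := hvper n; push_cast at h; exact h
  rw [hwrap] at hkey
  -- rewrite f-sums
  have hS1 : (∑ j ∈ Finset.Icc 1 g, ∑ k ∈ Finset.Icc j g,
        f (n + (2*(j:ℤ) - 1)) x * f (n + 2*(k:ℤ)) x)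
      = ∑ j ∈ Finset.Icc 1 g, ∑ k ∈ Finset.Icc j g,
          (v (n + 2*(j:ℤ)) x + v (n + (2*(j:ℤ)-1)) x)
            * (v (n + (2*(k:ℤ)+1)) x + v (n + 2*(k:ℤ)) x) :=
    Finset.sum_congr rfl (fun j _ => Finset.sum_congr rfl (fun k _ => by
      rw [hf, hf, show n + (2*(j:ℤ)-1) + 1 = n + 2*(j:ℤ) by ring,
        show n + 2*(k:ℤ) + 1 = n + (2*(k:ℤ)+1) by ring]))
  have hS2 : (∑ j ∈ Finset.Icc 1 g, ∑ k ∈ Finset.Icc j g,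
        f (n + 2*(j:ℤ)) x * f (n + (2*(k:ℤ) + 1)) x)
      = ∑ j ∈ Finset.Icc 1 g, ∑ k ∈ Finset.Icc j g,
          (v (n + (2*(j:ℤ)+1)) x + v (n + 2*(j:ℤ)) x)
            * (v (n + (2*(k:ℤ)+2)) x + v (n + (2*(k:ℤ)+1)) x) :=
    Finset.sum_congr rfl (fun j _ => Finset.sum_congr rfl (fun k _ => by
      rw [hf, hf, show n + 2*(j:ℤ) + 1 = n + (2*(j:ℤ)+1) by ring,
        show n + (2*(k:ℤ)+1) + 1 = n + (2*(k:ℤ)+2) by ring]))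
  rw [hderiv_f, hS1, hS2, hf n x, hαtot, hSα, hV]
  linear_combination (v (n+1) x + v n x) * hkey
end

section
/- For an N-periodic dressing chain, Adler's Lax equation holds: for every n and every λ ∈ ℝ, the entrywise x-derivative of V_n(λ) satisfies V̇_n(λ) = U_{n+1}(λ + α_n) V_n(λ) − V_n(λ) U_n(λ). -/
/-- Adler's matrix V_n(λ) with rows (v_n, 1) and (λ + v_n², v_n), at position x. -/
noncomputable def adlerV (v : ℤ → ℝ → ℝ) (n : ℤ) (lam x : ℝ) : Matrix (Fin 2) (Fin 2) ℝ :=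
  !![v n x, 1; lam + (v n x) ^ 2, v n x]

/-- Adler's matrix U_n(λ) with rows (0, 1) and (λ + u_n, 0), where u_n = v_n² - v̇_n. -/
noncomputable def adlerU (v : ℤ → ℝ → ℝ) (n : ℤ) (lam x : ℝ) : Matrix (Fin 2) (Fin 2) ℝ :=
  !![0, 1; lam + ((v n x) ^ 2 - deriv (v n) x), 0]

/-- Adler's Lax equation
V̇_n(λ) = U_{n+1}(λ + α_n) V_n(λ) − V_n(λ) U_n(λ) holds for an N-periodic dressing chain. -/
theorem dressing_chain_adler_lax (N : ℕ) (hN : 3 ≤ N)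
    (v : ℤ → ℝ → ℝ) (α : ℤ → ℝ)
    (hsmooth : ∀ n : ℤ, ContDiff ℝ (⊤ : ℕ∞) (v n))
    (hvper : ∀ n : ℤ, v (n + (N : ℤ)) = v n)
    (hαper : ∀ n : ℤ, α (n + (N : ℤ)) = α n)
    (hchain : ∀ (n : ℤ) (x : ℝ),
      deriv (v n) x + deriv (v (n + 1)) x = (v (n + 1) x) ^ 2 - (v n x) ^ 2 + α n) :
    ∀ (n : ℤ) (lam x : ℝ),
      (Matrix.of fun i j => deriv (fun y => adlerV v n lam y i j) x)
        = adlerU v (n + 1) (lam + α n) x * adlerV v n lam x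
          - adlerV v n lam x * adlerU v n lam x := by
  intro n lam x
  have hd : ∀ m : ℤ, HasDerivAt (v m) (deriv (v m) x) x :=
    fun m => (((hsmooth m).differentiable (by simp)).differentiableAt).hasDerivAt
  have hder : deriv (v (n+1)) x = (v (n + 1) x) ^ 2 - (v n x) ^ 2 + α n - deriv (v n) x := by
    have := hchain n x; linarith
  have h10 : deriv (fun y => lam + v n y ^ 2) x = 2 * v n x * deriv (v n) x := by
    have h := (((hd n).pow 2).const_add lam)
    simpa [mul_comm, mul_assoc, mul_left_comm] using h.deriv
  ext i j
  fin_cases i <;> fin_cases j <;>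
    simp [adlerV, adlerU, Matrix.mul_apply, Fin.sum_univ_two, h10, hder] <;> ring
end

section
/- (Proposition 2) Fix g ≥ 1, a real polynomial Q(λ), real constants b_0 ≠ 0 and I_0, and an integer parity datum: either (odd case) set E(λ) = I_0 λ^g or (even case) set E(λ) = 2λ^{g+1} + I_0 λ^g. On the open set of points (λ_1,...,λ_g, z_1,...,z_g) ∈ ℝ^{2g} with the λ_j pairwise distinct and each z_j ≠ 0, define B(λ) = b_0 ∏_{j=1}^g (λ − λ_j), let P(λ) be the unique polynomial of the form E(λ) + I_1 λ^{g−1} + ⋯ + I_g satisfying P(λ_j) = z_j + Q(λ_j)/z_j for j = 1,...,g, and set H = Σ_{j=1}^g (z_j + Q(λ_j) z_j^{−1} − E(λ_j)) / B'(λ_j), where B'(λ_j) = ∂_λ B evaluated at λ_j. Then H = I_1 / b_0, and for each j: z_j ∂H/∂z_j = (z_j − Q(λ_j) z_j^{−1}) / B'(λ_j) and −z_j ∂H/∂λ_j = (P'(λ_j) z_j − Q'(λ_j)) / B'(λ_j). Hence the system λ̇_j = (z_j − Q(λ_j) z_j^{−1})/B'(λ_j), ż_j = (P'(λ_j) z_j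 − Q'(λ_j))/B'(λ_j) coincides with the Hamiltonian system λ̇_j = z_j ∂H/∂z_j, ż_j = −z_j ∂H/∂λ_j. -/
/-- B(λ) = b₀ ∏_{j=1}^g (λ − λ_j), as a polynomial. -/
noncomputable def specB (g : ℕ) (b0 : ℝ) (lam : Fin g → ℝ) : Polynomial ℝ :=
  Polynomial.C b0 * ∏ j : Fin g, (Polynomial.X - Polynomial.C (lam j))

/-- B'(λ_j), the λ-derivative of B evaluated at λ_j. -/
noncomputable def specBd (g : ℕ) (b0 : ℝ) (lam : Fin g → ℝ) (j : Fin g) : ℝ :=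
  (Polynomial.derivative (specB g b0 lam)).eval (lam j)

/-- The spectral Hamiltonian H = Σ_j (z_j + Q(λ_j) z_j⁻¹ − E(λ_j)) / B'(λ_j). -/
noncomputable def specH (g : ℕ) (b0 : ℝ) (Q E : Polynomial ℝ) (lam z : Fin g → ℝ) : ℝ :=
  ∑ j : Fin g, (z j + Q.eval (lam j) / z j - E.eval (lam j)) / specBd g b0 lam j

open Polynomial Finset in
lemma specBd_eq (g : ℕ) (b0 : ℝ) (lam : Fin g → ℝ) (j : Fin g) :
    specBd g b0 lam j = b0 * ∏ k ∈ Finset.univ.erase j, (lam j - lam k) := by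
  have h : specB g b0 lam = Polynomial.C b0 * Lagrange.nodal Finset.univ lam := by
    rw [specB, Lagrange.nodal_eq]
  rw [specBd, h, derivative_C_mul, eval_mul, eval_C,
    Lagrange.eval_nodal_derivative_eval_node_eq (Finset.mem_univ j), Lagrange.eval_nodal]

lemma specBd_ne (g : ℕ) (b0 : ℝ) (hb0 : b0 ≠ 0) (lam : Fin g → ℝ)
    (hlam : Function.Injective lam) (j : Fin g) : specBd g b0 lam j ≠ 0 := by
  rw [specBd_eq]
  refine mul_ne_zero hb0 (Finset.prod_ne_zero_iff.2 fun k hk => ?_)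
  have : k ≠ j := (Finset.mem_erase.1 hk).1
  exact sub_ne_zero.2 fun h => this (hlam h.symm)

open Polynomial Finset in
lemma lag_sum (g : ℕ) (lam : Fin g → ℝ) (hlam : Function.Injective lam)
    (R : Polynomial ℝ) (hR : R.degree < (g : WithBot ℕ)) :
    ∑ j : Fin g, R.eval (lam j) / ∏ k ∈ Finset.univ.erase j, (lam j - lam k)
      = R.coeff (g - 1) := by
  have hinj : Set.InjOn lam ↑(Finset.univ : Finset (Fin g)) := hlam.injOn
  have hcard : #(Finset.univ : Finset (Fin g)) = g := by simp
  have hR' : R.degree < #(Finset.univ : Finset (Fin g)) := by rw [hcard]; exact_mod_cast hR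
  have hRe := Lagrange.eq_interpolate hinj hR'
  have hbasis : ∀ i : Fin g, (Lagrange.basis Finset.univ lam i).coeff (g - 1)
      = ∏ k ∈ Finset.univ.erase i, (lam i - lam k)⁻¹ := by
    intro i
    have hnd : (Lagrange.basis Finset.univ lam i).natDegree = g - 1 := by
      rw [Lagrange.natDegree_basis hinj (Finset.mem_univ i), hcard]
    rw [← hnd, Polynomial.coeff_natDegree, Lagrange.basis, Polynomial.leadingCoeff_prod]
    refine Finset.prod_congr rfl fun k hk => ?_
    rw [Lagrange.basisDivisor, leadingCoeff_mul, leadingCoeff_C,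
      (monic_X_sub_C (lam k)).leadingCoeff, mul_one]
  conv_rhs => rw [hRe]
  rw [Lagrange.interpolate_apply, Polynomial.finset_sum_coeff]
  refine Finset.sum_congr rfl fun i _ => ?_
  rw [Polynomial.coeff_C_mul, hbasis i, div_eq_mul_inv, Finset.prod_inv_distrib]

lemma lag_sum' (g : ℕ) (b0 : ℝ) (lam : Fin g → ℝ) (hlam : Function.Injective lam)
    (R : Polynomial ℝ) (hR : R.degree < (g : WithBot ℕ)) :
    ∑ j : Fin g, R.eval (lam j) / specBd g b0 lam j = R.coeff (g - 1) / b0 := by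
  rw [← lag_sum g lam hlam R hR, Finset.sum_div]
  refine Finset.sum_congr rfl fun j _ => ?_
  rw [specBd_eq, mul_comm, div_div]

/-- Proposition 2: with E = I₀λ^g (odd case) or E = 2λ^{g+1} + I₀λ^g
(even case), B = b₀∏(λ−λ_j) and P = E + I₁λ^{g−1} + ⋯ + I_g the interpolation polynomial
with P(λ_j) = z_j + Q(λ_j)/z_j, the Hamiltonian H = Σ_j (z_j + Q(λ_j)z_j⁻¹ − E(λ_j))/B'(λ_j)
satisfies H = I₁/b₀, z_j ∂H/∂z_j = (z_j − Q(λ_j)z_j⁻¹)/B'(λ_j) and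
−z_j ∂H/∂λ_j = (P'(λ_j)z_j − Q'(λ_j))/B'(λ_j). -/
theorem spectral_hamiltonian_system (g : ℕ) (hg : 1 ≤ g) (b0 I0 : ℝ) (hb0 : b0 ≠ 0)
    (Q E : Polynomial ℝ)
    (hE : E = Polynomial.C I0 * Polynomial.X ^ g ∨
          E = 2 * Polynomial.X ^ (g + 1) + Polynomial.C I0 * Polynomial.X ^ g)
    (lam z : Fin g → ℝ) (hlam : Function.Injective lam) (hz : ∀ j, z j ≠ 0)
    (P : Polynomial ℝ) (hPdeg : (P - E).degree < (g : WithBot ℕ))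
    (hPval : ∀ j, P.eval (lam j) = z j + Q.eval (lam j) / z j) :
    specH g b0 Q E lam z = P.coeff (g - 1) / b0 ∧
    (∀ j : Fin g,
      z j * deriv (fun t => specH g b0 Q E lam (Function.update z j t)) (z j)
        = (z j - Q.eval (lam j) / z j) / specBd g b0 lam j) ∧
    (∀ j : Fin g,
      -(z j) * deriv (fun t => specH g b0 Q E (Function.update lam j t) z) (lam j)
        = ((Polynomial.derivative P).eval (lam j) * z j
            - (Polynomial.derivative Q).eval (lam j)) / specBd g b0 lam j) := by
  have hEc : E.coeff (g - 1) = 0 := by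
    have h1 : g - 1 ≠ g := by omega
    have h2 : g - 1 ≠ g + 1 := by omega
    rcases hE with rfl | rfl
    · simp [Polynomial.coeff_C_mul, Polynomial.coeff_X_pow, h1]
    · rw [two_mul]
      simp [Polynomial.coeff_add, Polynomial.coeff_C_mul, Polynomial.coeff_X_pow, h1, h2]
  have hcoeff : (P - E).coeff (g - 1) = P.coeff (g - 1) := by
    rw [Polynomial.coeff_sub, hEc, sub_zero]
  refine ⟨?_, ?_, ?_⟩
  · -- Part 1: H = I₁/b₀
    have h1 : specH g b0 Q E lam z
        = ∑ j : Fin g, (P - E).eval (lam j) / specBd g b0 lam j := by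
      refine Finset.sum_congr rfl fun j _ => ?_
      rw [Polynomial.eval_sub, hPval j]
    rw [h1, lag_sum' g b0 lam hlam _ hPdeg, hcoeff]
  · -- Part 2
    intro j
    have hfun : (fun t => specH g b0 Q E lam (Function.update z j t))
        = fun t => (t + Q.eval (lam j) * t⁻¹ - E.eval (lam j)) / specBd g b0 lam j
          + ∑ k ∈ Finset.univ.erase j,
              (z k + Q.eval (lam k) / z k - E.eval (lam k)) / specBd g b0 lam k := by
      funext t
      rw [specH, ← Finset.add_sum_erase _ _ (Finset.mem_univ j)]
      congr 1
      · simp only [Function.update_self, div_eq_mul_inv]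
      · exact Finset.sum_congr rfl fun k hk => by
          rw [Function.update_of_ne (Finset.mem_erase.1 hk).1]
    have hder : HasDerivAt
        (fun t : ℝ => (t + Q.eval (lam j) * t⁻¹ - E.eval (lam j)) / specBd g b0 lam j
          + ∑ k ∈ Finset.univ.erase j,
              (z k + Q.eval (lam k) / z k - E.eval (lam k)) / specBd g b0 lam k)
        ((1 + Q.eval (lam j) * (-((z j)^2)⁻¹)) / specBd g b0 lam j) (z j) := by
      exact ((((hasDerivAt_id (z j)).add
        ((hasDerivAt_inv (hz j)).const_mul (Q.eval (lam j)))).sub_const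
        (E.eval (lam j))).div_const (specBd g b0 lam j)).add_const _
    rw [hfun, hder.deriv, ← mul_div_assoc]
    congr 1
    field_simp [hz j]
    ring
  · -- Part 3
    intro j
    set N : ℝ → ℝ := fun t => z j + Q.eval t / z j - P.eval t with hN
    set Dp : Polynomial ℝ := Polynomial.C b0 * Lagrange.nodal (Finset.univ.erase j) lam
      with hDp
    have hDeval : ∀ t : ℝ, Dp.eval t = b0 * ∏ k ∈ Finset.univ.erase j, (t - lam k) := by
      intro t
      rw [hDp, Polynomial.eval_mul, Polynomial.eval_C, Lagrange.eval_nodal]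
    have hD0 : Dp.eval (lam j) = specBd g b0 lam j := by
      rw [hDeval, specBd_eq]
    have hBdne := specBd_ne g b0 hb0 lam hlam j
    have hDne : Dp.eval (lam j) ≠ 0 := by rw [hD0]; exact hBdne
    -- key pointwise identity
    have key : ∀ t : ℝ, (∀ k : Fin g, k ≠ j → t ≠ lam k) →
        specH g b0 Q E (Function.update lam j t) z
          = (P - E).coeff (g - 1) / b0 + N t / Dp.eval t := by
      intro t ht
      set lam' := Function.update lam j t with hlam'def
      have hval : ∀ k : Fin g, k ≠ j → lam' k = lam k := fun k hk =>
        Function.update_of_ne hk _ _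
      have hvalj : lam' j = t := Function.update_self _ _ _
      have hlam' : Function.Injective lam' := by
        intro a b hab
        by_cases ha : a = j <;> by_cases hb : b = j
        · rw [ha, hb]
        · exact absurd (by rw [← hvalj, ← ha, hab, hval b hb]) (ht b hb)
        · exact absurd (by rw [← hvalj, ← hb, ← hab, hval a ha]) (ht a ha)
        · exact hlam (by rw [← hval a ha, ← hval b hb, hab])
      have hBd'j : specBd g b0 lam' j = Dp.eval t := by
        rw [specBd_eq, hDeval, hvalj]
        congr 1
        exact Finset.prod_congr rfl fun k hk => by
          rw [hval k (Finset.mem_erase.1 hk).1]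
      have hsplit : ∀ k : Fin g,
          (z k + Q.eval (lam' k) / z k - E.eval (lam' k)) / specBd g b0 lam' k
            = (P - E).eval (lam' k) / specBd g b0 lam' k
              + (if k = j then N t / Dp.eval t else 0) := by
        intro k
        by_cases hk : k = j
        · subst hk
          rw [if_pos rfl, hvalj, hBd'j, ← add_div]
          congr 1
          rw [Polynomial.eval_sub, hN]
          ring
        · rw [if_neg hk, add_zero, hval k hk, Polynomial.eval_sub, hPval k]
      rw [specH]
      simp_rw [hsplit]
      rw [Finset.sum_add_distrib, Finset.sum_ite_eq' Finset.univ j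
        (fun _ => N t / Dp.eval t), if_pos (Finset.mem_univ j),
        lag_sum' g b0 lam' hlam' _ hPdeg]
    -- eventual equality near lam j
    have hev : (fun t => specH g b0 Q E (Function.update lam j t) z)
        =ᶠ[nhds (lam j)] fun t => (P - E).coeff (g - 1) / b0 + N t / Dp.eval t := by
      have hfin : (lam '' {k | k ≠ j}).Finite := (Set.toFinite _).image _
      have hopen : IsOpen (lam '' {k | k ≠ j})ᶜ := hfin.isClosed.isOpen_compl
      have hmem : lam j ∈ (lam '' {k | k ≠ j})ᶜ := by
        rintro ⟨k, hk, hkj⟩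
        exact hk (hlam hkj)
      filter_upwards [hopen.mem_nhds hmem] with t ht
      exact key t fun k hk h => ht ⟨k, hk, h.symm⟩
    rw [hev.deriv_eq]
    have hNder : HasDerivAt N
        ((Polynomial.derivative Q).eval (lam j) / z j
          - (Polynomial.derivative P).eval (lam j)) (lam j) :=
      (((Q.hasDerivAt (lam j)).div_const (z j)).const_add (z j)).sub (P.hasDerivAt (lam j))
    have hDder : HasDerivAt (fun t => Dp.eval t)
        (Dp.derivative.eval (lam j)) (lam j) := Dp.hasDerivAt _
    have hN0 : N (lam j) = 0 := by rw [hN]; simp only; rw [hPval j]; ring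
    have hder : HasDerivAt
        (fun t => (P - E).coeff (g - 1) / b0 + N t / Dp.eval t)
        ((((Polynomial.derivative Q).eval (lam j) / z j
            - (Polynomial.derivative P).eval (lam j)) * Dp.eval (lam j)
          - N (lam j) * Dp.derivative.eval (lam j)) / (Dp.eval (lam j))^2) (lam j) :=
      (hNder.div hDder hDne).const_add _
    rw [hder.deriv, hN0, hD0]
    field_simp [hz j]
    ring
end

section
/- Let N ≥ 4, let f_1,...,f_N be commuting indeterminates with indices modulo N, and define the Poisson bracket on the polynomial ring by {F, G} = Σ_{m,n=1}^{N} (−δ_{m+1,n} + δ_{m−1,n}) (∂F/∂f_m)(∂G/∂f_n), where the Kronecker deltas are evaluated modulo N. With β_1,...,β_{N−2} real constants, F_m(λ) = ∏_{n=m}^{N−2} (1 + (λ + β_n) ∂²/∂f_n ∂f_{n+1}) applied to f_m ⋯ f_{N−1} for 1 ≤ m ≤ N−2, and F_{N−1}(λ) = f_{N−1}, the following hold for all 0 ≤ n ≤ N−3 and all parameters λ, μ: {F_{n+1}(λ), F_{n+1}(μ)} = 0, {F_{n+2}(λ), F_{n+2}(μ)} = 0, and (λ − μ) {F_{n+1}(λ),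 F_{n+2}(μ)} = F_{n+2}(λ) F_{n+1}(μ) − F_{n+1}(λ) F_{n+2}(μ). -/
/-- The Veselov–Shabat operator 1 + (λ + β_n) ∂²/∂f_n ∂f_{n+1}, for a real parameter λ,
on the polynomial ring in the variables f_1, f_2, … over ℝ. -/
noncomputable def vsOpR (lam : ℝ) (β : ℕ → ℝ) (n : ℕ) (p : MvPolynomial ℕ ℝ) :
    MvPolynomial ℕ ℝ :=
  p + MvPolynomial.C (lam + β n) *
      MvPolynomial.pderiv n (MvPolynomial.pderiv (n + 1) p)

/-- F_m(λ) = ∏_{n=m}^{N−2} (1 + (λ + β_n) ∂²/∂f_n ∂f_{n+1}) (f_m f_{m+1} ⋯ f_{N−1});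
for m = N−1 this is just f_{N−1}. -/
noncomputable def vsFR (lam : ℝ) (β : ℕ → ℝ) (N m : ℕ) : MvPolynomial ℕ ℝ :=
  (List.range' m (N - 1 - m)).foldr (vsOpR lam β)
    (∏ n ∈ Finset.Icc m (N - 1), MvPolynomial.X n)

/-- The Poisson bracket {F, G} = Σ_{m,n=1}^{N} (−δ_{m+1,n} + δ_{m−1,n})
(∂F/∂f_m)(∂G/∂f_n), Kronecker deltas evaluated modulo N. -/
noncomputable def nyBracket (N : ℕ) (F G : MvPolynomial ℕ ℝ) : MvPolynomial ℕ ℝ :=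
  ∑ m ∈ Finset.Icc 1 N, ∑ n ∈ Finset.Icc 1 N,
    ((if (m + 1) % N = n % N then (-1 : MvPolynomial ℕ ℝ) else 0)
      + (if (n + 1) % N = m % N then 1 else 0))
      * MvPolynomial.pderiv m F * MvPolynomial.pderiv n G

/-! Expanding the outermost operator gives the three-term recursion
F_m(λ) = f_m F_{m+1}(λ) + (λ + β_m) F_{m+2}(λ). Since F_{m+1} and F_{m+2} only involve
f_{m+1}, …, f_{N-1}, bracketing with f_m acts on them as -∂/∂f_{m+1}, so
{f_m, F_{m+1}(λ)} = -F_{m+2}(λ) and {f_m, F_{m+2}(λ)} = 0. With the Leibniz rule the relations then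
propagate downwards from m = N - 1, provided the induction also carries the symmetry
{F_m(λ), F_{m+1}(μ)} = {F_m(μ), F_{m+1}(λ)}. -/

open MvPolynomial

section
variable {R σ : Type*} [CommRing R]

theorem pderiv_pderiv_comm (i j : σ) (p : MvPolynomial σ R) :
    pderiv i (pderiv j p) = pderiv j (pderiv i p) := by
  classical
  have h : ⁅pderiv i, pderiv j⁆ = (0 : Derivation R (MvPolynomial σ R) (MvPolynomial σ R)) :=
    derivation_ext fun k => by
      rw [Derivation.commutator_apply, pderiv_X, pderiv_X, Pi.single_apply, Pi.single_apply]
      split_ifs <;> simp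
  exact sub_eq_zero.mp (congrArg (· p) h)

theorem pderiv_prod_X_of_notMem [Nontrivial R] {j : σ} {s : Finset σ} (h : j ∉ s) :
    pderiv j (∏ n ∈ s, (X n : MvPolynomial σ R)) = 0 := by
  classical
  refine pderiv_eq_zero_of_notMem_vars fun hj => h ?_
  obtain ⟨a, ha, hja⟩ := Finset.mem_biUnion.mp (vars_prod _ hj)
  rw [vars_X, Finset.mem_singleton] at hja
  rwa [hja]

end

theorem Nat.succ_mod_eq_mod_iff {N a b : ℕ} (hb : 1 ≤ b) (ha : a < N) (hbN : b < N) :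
    (a + 1) % N = b % N ↔ a + 1 = b := by
  rw [Nat.mod_eq_of_lt hbN]
  rcases lt_or_eq_of_le (show a + 1 ≤ N from ha) with h | h
  · rw [Nat.mod_eq_of_lt h]
  · rw [h, Nat.mod_self]
    omega

section VeselovShabat

variable {lam : ℝ} {β : ℕ → ℝ}

theorem pderiv_vsOpR_eq_zero {j : ℕ} {p : MvPolynomial ℕ ℝ} (n : ℕ) (h : pderiv j p = 0) :
    pderiv j (vsOpR lam β n p) = 0 := by
  rw [vsOpR, map_add, pderiv_C_mul, pderiv_pderiv_comm j n, pderiv_pderiv_comm j (n + 1), h,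
    map_zero, map_zero, mul_zero, add_zero]

theorem pderiv_foldr_vsOpR_eq_zero {j : ℕ} {p : MvPolynomial ℕ ℝ} (l : List ℕ)
    (h : pderiv j p = 0) : pderiv j (l.foldr (vsOpR lam β) p) = 0 := by
  induction l with
  | nil => exact h
  | cons n l ih => exact pderiv_vsOpR_eq_zero n ih

theorem pderiv_vsFR_eq_zero {N m j : ℕ} (h : j ∉ Finset.Icc m (N - 1)) :
    pderiv j (vsFR lam β N m) = 0 :=
  pderiv_foldr_vsOpR_eq_zero _ (pderiv_prod_X_of_notMem h)

theorem foldr_vsOpR_X_mul {m : ℕ} {l : List ℕ} (h : ∀ n ∈ l, m < n) (p : MvPolynomial ℕ ℝ) :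
    l.foldr (vsOpR lam β) (X m * p) = X m * l.foldr (vsOpR lam β) p := by
  induction l with
  | nil => rfl
  | cons n l ih =>
    have hn : m < n := h n List.mem_cons_self
    have hX : ∀ {k} (q : MvPolynomial ℕ ℝ), m ≠ k → pderiv k (X m * q) = X m * pderiv k q :=
      fun q hk => by rw [pderiv_mul, pderiv_X_of_ne hk, zero_mul, zero_add]
    rw [List.foldr_cons, List.foldr_cons, ih fun k hk => h k (List.mem_cons_of_mem n hk), vsOpR,
      vsOpR, hX _ (by omega), hX _ (by omega)]
    ring

theorem vsFR_of_le {N m : ℕ} (h : N - 1 ≤ m) :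
    vsFR lam β N m = ∏ n ∈ Finset.Icc m (N - 1), X n := by
  rw [vsFR, Nat.sub_eq_zero_of_le h, List.range'_zero, List.foldr_nil]

theorem vsFR_eq_one {N m : ℕ} (h : N - 1 < m) : vsFR lam β N m = 1 := by
  rw [vsFR_of_le h.le, Finset.Icc_eq_empty_of_lt h, Finset.prod_empty]

theorem vsFR_eq_vsOpR {N m : ℕ} (hm : m + 2 ≤ N) :
    vsFR lam β N m = vsOpR lam β m (X m * vsFR lam β N (m + 1)) := by
  rw [vsFR, vsFR, show N - 1 - m = N - 1 - (m + 1) + 1 by omega, List.range'_succ,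
    List.foldr_cons, ← Finset.insert_Icc_add_one_left_eq_Icc (by omega),
    Finset.prod_insert (by simp), foldr_vsOpR_X_mul fun n hn => by simp at hn; omega]

theorem vsFR_eq_X_mul_add_pderiv {N m : ℕ} (hm : m + 2 ≤ N) :
    vsFR lam β N m = X m * vsFR lam β N (m + 1)
      + C (lam + β m) * pderiv (m + 1) (vsFR lam β N (m + 1)) := by
  set F := vsFR lam β N (m + 1)
  have hF : pderiv m F = 0 := pderiv_vsFR_eq_zero (by simp)
  have hX : pderiv (m + 1) (X m * F) = X m * pderiv (m + 1) F := by
    rw [pderiv_mul, pderiv_X_of_ne (by omega), zero_mul, zero_add]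
  rw [vsFR_eq_vsOpR hm, vsOpR, hX, pderiv_mul, pderiv_X_self, one_mul, pderiv_pderiv_comm, hF,
    map_zero, mul_zero, add_zero]

theorem pderiv_vsFR_self {N m : ℕ} (hm : m < N) :
    pderiv m (vsFR lam β N m) = vsFR lam β N (m + 1) := by
  rcases lt_or_eq_of_le (show m + 1 ≤ N from hm) with hm | rfl
  · have hF : pderiv m (vsFR lam β N (m + 1)) = 0 := pderiv_vsFR_eq_zero (by simp)
    rw [vsFR_eq_X_mul_add_pderiv hm, map_add, pderiv_C_mul, pderiv_mul, pderiv_X_self, one_mul,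
      hF, mul_zero, add_zero, pderiv_pderiv_comm, hF, map_zero, mul_zero, add_zero]
  · rw [vsFR_eq_one (m := m + 1) (by omega), vsFR_of_le (by omega), Nat.add_sub_cancel,
      Finset.Icc_self, Finset.prod_singleton, pderiv_X_self]

theorem vsFR_eq_X_mul_add {N m : ℕ} (hm : m + 2 ≤ N) :
    vsFR lam β N m = X m * vsFR lam β N (m + 1) + C (lam + β m) * vsFR lam β N (m + 2) := by
  rw [vsFR_eq_X_mul_add_pderiv hm, pderiv_vsFR_self (by omega)]

end VeselovShabat

section Bracket

variable {N : ℕ}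

theorem nyBracket_add_left (F₁ F₂ G : MvPolynomial ℕ ℝ) :
    nyBracket N (F₁ + F₂) G = nyBracket N F₁ G + nyBracket N F₂ G := by
  simp only [nyBracket, ← Finset.sum_add_distrib]
  exact Finset.sum_congr rfl fun _ _ => Finset.sum_congr rfl fun _ _ => by rw [map_add]; ring

theorem nyBracket_mul_left (P Q G : MvPolynomial ℕ ℝ) :
    nyBracket N (P * Q) G = P * nyBracket N Q G + Q * nyBracket N P G := by
  simp only [nyBracket, Finset.mul_sum, ← Finset.sum_add_distrib]
  exact Finset.sum_congr rfl fun _ _ => Finset.sum_congr rfl fun _ _ => by rw [pderiv_mul]; ring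

theorem nyBracket_C_left (a : ℝ) (G : MvPolynomial ℕ ℝ) : nyBracket N (C a) G = 0 := by
  simp [nyBracket]

theorem nyBracket_anticomm (F G : MvPolynomial ℕ ℝ) : nyBracket N F G = -nyBracket N G F := by
  rw [nyBracket, nyBracket, Finset.sum_comm, ← Finset.sum_neg_distrib]
  refine Finset.sum_congr rfl fun i _ => ?_
  rw [← Finset.sum_neg_distrib]
  refine Finset.sum_congr rfl fun j _ => ?_
  split_ifs <;> ring

theorem nyBracket_self (F : MvPolynomial ℕ ℝ) : nyBracket N F F = 0 :=
  self_eq_neg.mp (nyBracket_anticomm F F)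

theorem nyBracket_add_right (F G₁ G₂ : MvPolynomial ℕ ℝ) :
    nyBracket N F (G₁ + G₂) = nyBracket N F G₁ + nyBracket N F G₂ := by
  rw [nyBracket_anticomm, nyBracket_add_left, nyBracket_anticomm G₁, nyBracket_anticomm G₂]
  ring

theorem nyBracket_mul_right (F P Q : MvPolynomial ℕ ℝ) :
    nyBracket N F (P * Q) = P * nyBracket N F Q + Q * nyBracket N F P := by
  rw [nyBracket_anticomm, nyBracket_mul_left, nyBracket_anticomm Q, nyBracket_anticomm P]
  ring

theorem nyBracket_C_right (F : MvPolynomial ℕ ℝ) (a : ℝ) : nyBracket N F (C a) = 0 := by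
  rw [nyBracket_anticomm, nyBracket_C_left, neg_zero]

theorem nyBracket_X_left {k : ℕ} {G : MvPolynomial ℕ ℝ} (hk : 1 ≤ k) (hkN : k + 2 ≤ N)
    (hG : ∀ j ∉ Finset.Ioo k N, pderiv j G = 0) :
    nyBracket N (X k) G = -pderiv (k + 1) G := by
  unfold nyBracket
  rw [Finset.sum_eq_single_of_mem k (by simp; omega) fun m _ hm => by
      simp only [pderiv_X_of_ne (Ne.symm hm), mul_zero, zero_mul, Finset.sum_const_zero],
    Finset.sum_eq_single_of_mem (k + 1) (by simp; omega) fun n hn hne => ?_]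
  · rw [if_pos rfl, if_neg (by rw [Nat.succ_mod_eq_mod_iff hk (by omega) (by omega)]; omega)]
    simp
  by_cases hnG : n ∈ Finset.Ioo k N
  · rw [Finset.mem_Ioo] at hnG
    rw [if_neg (by rw [Nat.succ_mod_eq_mod_iff (by omega) (by omega) (by omega)]; omega),
      if_neg (by rw [Nat.succ_mod_eq_mod_iff hk (by omega) (by omega)]; omega)]
    simp
  · rw [hG n hnG, mul_zero]

end Bracket

structure PoissonRelationsAt (β : ℕ → ℝ) (N m : ℕ) : Prop where
  bracket_self (lam mu : ℝ) : nyBracket N (vsFR lam β N m) (vsFR mu β N m) = 0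
  bracket_succ_comm (lam mu : ℝ) :
    nyBracket N (vsFR lam β N m) (vsFR mu β N (m + 1)) =
      nyBracket N (vsFR mu β N m) (vsFR lam β N (m + 1))
  bracket_succ (lam mu : ℝ) :
    C (lam - mu) * nyBracket N (vsFR lam β N m) (vsFR mu β N (m + 1)) =
      vsFR lam β N (m + 1) * vsFR mu β N m - vsFR lam β N m * vsFR mu β N (m + 1)

section Relations

variable {β : ℕ → ℝ} {N m : ℕ}

theorem poissonRelationsAt_of_le (h : N - 1 ≤ m) : PoissonRelationsAt β N m := by
  have hm : ∀ lam, vsFR lam β N m = ∏ n ∈ Finset.Icc m (N - 1), X n := fun _ => vsFR_of_le h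
  have hm₁ : ∀ lam, vsFR lam β N (m + 1) = 1 := fun _ => vsFR_eq_one (by omega)
  refine ⟨fun lam mu => ?_, fun lam mu => ?_, fun lam mu => ?_⟩
  · rw [hm, hm, nyBracket_self]
  · rw [hm, hm, hm₁, hm₁]
  · rw [hm, hm, hm₁, hm₁, ← C_1, nyBracket_C_right]
    ring

theorem nyBracket_X_vsFR_succ (lam : ℝ) (hm : 1 ≤ m) (hmN : m + 2 ≤ N) :
    nyBracket N (X m) (vsFR lam β N (m + 1)) = -vsFR lam β N (m + 2) := by
  rw [nyBracket_X_left hm hmN fun j hj => pderiv_vsFR_eq_zero (by simp at hj ⊢; omega),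
    pderiv_vsFR_self (by omega)]

theorem nyBracket_X_vsFR_add_two (lam : ℝ) (hm : 1 ≤ m) (hmN : m + 2 ≤ N) :
    nyBracket N (X m) (vsFR lam β N (m + 2)) = 0 := by
  rw [nyBracket_X_left hm hmN fun j hj => pderiv_vsFR_eq_zero (by simp at hj ⊢; omega),
    pderiv_vsFR_eq_zero (by simp), neg_zero]

theorem PoissonRelationsAt.nyBracket_succ_swap {k : ℕ} (h : PoissonRelationsAt β N k)
    (lam mu : ℝ) : nyBracket N (vsFR lam β N (k + 1)) (vsFR mu β N k) =
      -nyBracket N (vsFR lam β N k) (vsFR mu β N (k + 1)) := by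
  rw [nyBracket_anticomm, h.bracket_succ_comm]

theorem nyBracket_vsFR_vsFR_succ (h₁ : PoissonRelationsAt β N (m + 1)) (hm : 1 ≤ m)
    (hmN : m + 2 ≤ N) (lam mu : ℝ) :
    nyBracket N (vsFR lam β N m) (vsFR mu β N (m + 1)) =
      -(vsFR lam β N (m + 1) * vsFR mu β N (m + 2))
        - C (lam + β m) * nyBracket N (vsFR lam β N (m + 1)) (vsFR mu β N (m + 2)) := by
  rw [vsFR_eq_X_mul_add hmN]
  simp only [nyBracket_add_left, nyBracket_mul_left, nyBracket_C_left]
  rw [h₁.bracket_self, nyBracket_X_vsFR_succ mu hm hmN, h₁.nyBracket_succ_swap]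
  ring

theorem PoissonRelationsAt.of_succ (h₁ : PoissonRelationsAt β N (m + 1))
    (h₂ : PoissonRelationsAt β N (m + 2)) (hm : 1 ≤ m) (hmN : m + 2 ≤ N) :
    PoissonRelationsAt β N m := by
  -- `h₁` speaks of `m + 1 + 1`; restating with `m + 2` lets `simp` and `ring` match the atoms.
  have hsucc (lam mu : ℝ) :
      C (lam - mu) * nyBracket N (vsFR lam β N (m + 1)) (vsFR mu β N (m + 2)) =
        vsFR lam β N (m + 2) * vsFR mu β N (m + 1)
          - vsFR lam β N (m + 1) * vsFR mu β N (m + 2) := h₁.bracket_succ lam mu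
  have hHG (lam mu : ℝ) : nyBracket N (vsFR lam β N (m + 2)) (vsFR mu β N (m + 1)) =
      -nyBracket N (vsFR lam β N (m + 1)) (vsFR mu β N (m + 2)) := h₁.nyBracket_succ_swap lam mu
  have hGX (lam : ℝ) : nyBracket N (vsFR lam β N (m + 1)) (X m) = vsFR lam β N (m + 2) := by
    rw [nyBracket_anticomm, nyBracket_X_vsFR_succ lam hm hmN, neg_neg]
  have hHX (lam : ℝ) : nyBracket N (vsFR lam β N (m + 2)) (X m) = 0 := by
    rw [nyBracket_anticomm, nyBracket_X_vsFR_add_two lam hm hmN, neg_zero]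
  refine ⟨fun lam mu => ?_, fun lam mu => ?_, fun lam mu => ?_⟩
  · have key := hsucc lam mu
    rw [vsFR_eq_X_mul_add hmN, vsFR_eq_X_mul_add hmN]
    simp only [nyBracket_add_left, nyBracket_add_right, nyBracket_mul_left, nyBracket_mul_right,
      nyBracket_C_left, nyBracket_C_right, nyBracket_self, h₁.bracket_self, h₂.bracket_self,
      nyBracket_X_vsFR_succ mu hm hmN, nyBracket_X_vsFR_add_two mu hm hmN, hGX, hHX, hHG]
    simp only [map_add, map_sub] at key ⊢
    linear_combination (-X m) * key
  · have key := hsucc lam mu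
    rw [nyBracket_vsFR_vsFR_succ h₁ hm hmN, nyBracket_vsFR_vsFR_succ h₁ hm hmN,
      h₁.bracket_succ_comm mu lam]
    simp only [map_add, map_sub] at key ⊢
    linear_combination -key
  · have key := hsucc lam mu
    rw [nyBracket_vsFR_vsFR_succ h₁ hm hmN, vsFR_eq_X_mul_add hmN, vsFR_eq_X_mul_add hmN]
    simp only [map_add, map_sub] at key ⊢
    linear_combination (-(C lam + C (β m))) * key

theorem poissonRelationsAt (β : ℕ → ℝ) (N : ℕ) {m : ℕ} (hm : 1 ≤ m) :
    PoissonRelationsAt β N m := by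
  rcases le_or_gt (N - 1) m with h | h
  · exact poissonRelationsAt_of_le h
  · exact (poissonRelationsAt β N (m := m + 1) (by omega)).of_succ
      (poissonRelationsAt β N (m := m + 2) (by omega)) hm (by omega)
termination_by N - m

end Relations

theorem vsF_poisson_relations_general (N : ℕ) (β : ℕ → ℝ)
    (n : ℕ) (lam mu : ℝ) :
    nyBracket N (vsFR lam β N (n + 1)) (vsFR mu β N (n + 1)) = 0 ∧
    nyBracket N (vsFR lam β N (n + 2)) (vsFR mu β N (n + 2)) = 0 ∧
    MvPolynomial.C (lam - mu) * nyBracket N (vsFR lam β N (n + 1)) (vsFR mu β N (n + 2))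
      = vsFR lam β N (n + 2) * vsFR mu β N (n + 1)
        - vsFR lam β N (n + 1) * vsFR mu β N (n + 2) :=
  ⟨(poissonRelationsAt β N (by omega)).bracket_self lam mu,
    (poissonRelationsAt β N (by omega)).bracket_self lam mu,
    (poissonRelationsAt β N (by omega)).bracket_succ lam mu⟩

/-- the polynomials F_m pairwise satisfy the Poisson relations
{F_{n+1}(λ), F_{n+1}(μ)} = 0, {F_{n+2}(λ), F_{n+2}(μ)} = 0 and
(λ − μ){F_{n+1}(λ), F_{n+2}(μ)} = F_{n+2}(λ) F_{n+1}(μ) − F_{n+1}(λ) F_{n+2}(μ). -/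
theorem vsF_poisson_relations (N : ℕ) (hN : 4 ≤ N) (β : ℕ → ℝ)
    (n : ℕ) (hn : n ≤ N - 3) (lam mu : ℝ) :
    nyBracket N (vsFR lam β N (n + 1)) (vsFR mu β N (n + 1)) = 0 ∧
    nyBracket N (vsFR lam β N (n + 2)) (vsFR mu β N (n + 2)) = 0 ∧
    MvPolynomial.C (lam - mu) * nyBracket N (vsFR lam β N (n + 1)) (vsFR mu β N (n + 2))
      = vsFR lam β N (n + 2) * vsFR mu β N (n + 1)
        - vsFR lam β N (n + 1) * vsFR mu β N (n + 2) :=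
  vsF_poisson_relations_general N β n lam mu
end

section
/- Fix g ≥ 1 and real constants b_0 ≠ 0 and ã_0. On the open set U ⊂ ℝ^{2g} of points (λ_1,...,λ_g, z_1,...,z_g) with the λ_j pairwise distinct, each λ_j ≠ 0, and each z_j ≠ 0, define for a real parameter λ the functions B(λ) = b_0 ∏_{j=1}^g (λ − λ_j) and Ã(λ) = ( ã_0/b_0 + Σ_{j=1}^g z_j / (B'(λ_j)(λ − λ_j) λ_j) ) · B(λ), where B'(λ_j) = ∂_λ B at λ_j. Define the Poisson bracket of smooth functions F, G on U by {F, G} = Σ_{j=1}^g z_j ( (∂F/∂λ_j)(∂G/∂z_j) − (∂F/∂z_j)(∂G/∂λ_j) ). Then for any real parameters λ, μ with λ ≠ μ and λ, μ not equal to any λ_j: {Ã(λ), Ã(μ)} = 0, {B(λ), B(μ)} = 0, and (λ − μ) {Ã(λ), B(μ)} = B(λ) Ã(μ) − Ã(λ) B(μ). -/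
/-! In Lagrange form, `Ã(σ) = a₀ ∏_m (σ − λ_m) + Σ_j (z_j / λ_j) L_j(σ)` with `L_j` the Lagrange
basis polynomial of the nodes `λ`. Hence `∂Ã(σ)/∂z_k` and `∂B(σ)/∂λ_k` are multiples of
`N_k(σ) = ∏_{m ≠ k} (σ − λ_m)` with coefficients independent of `σ`, and so is `∂Ã(σ)/∂λ_k`: moving
`λ_k` alone changes `Ã(σ)` by `φ(λ_k) N_k(σ)` plus a term that does not depend on `λ_k`. Every
summand of `{Ã(s), Ã(t)}` and `{B(s), B(t)}` is then `z_k N_k(s) N_k(t) (αβ − βα) = 0`, while the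
summands of `{Ã(s), B(t)}` combine through `B(σ) = b₀ (σ − λ_k) N_k(σ)` into
`(B(s) Ã(t) − Ã(s) B(t)) / (s − t)`. -/

/-- B(λ) = b₀ ∏_{j=1}^g (λ − λ_j), as a function of λ ∈ ℝ. -/
noncomputable def specBf (g : ℕ) (b0 : ℝ) (lam : Fin g → ℝ) (t : ℝ) : ℝ :=
  b0 * ∏ j : Fin g, (t - lam j)

/-- B'(λ_j), the λ-derivative of B at λ_j. -/
noncomputable def specBderiv (g : ℕ) (b0 : ℝ) (lam : Fin g → ℝ) (j : Fin g) : ℝ :=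
  deriv (specBf g b0 lam) (lam j)

/-- Ã(λ) = (ã₀/b₀ + Σ_j z_j / (B'(λ_j)(λ − λ_j)λ_j)) B(λ). -/
noncomputable def specAt (g : ℕ) (b0 a0 : ℝ) (lam z : Fin g → ℝ) (t : ℝ) : ℝ :=
  (a0 / b0 + ∑ j : Fin g, z j / (specBderiv g b0 lam j * (t - lam j) * lam j))
    * specBf g b0 lam t

/-- The Poisson bracket {F, G} = Σ_j z_j ((∂F/∂λ_j)(∂G/∂z_j) − (∂F/∂z_j)(∂G/∂λ_j))
of two functions of (λ_1,…,λ_g, z_1,…,z_g), evaluated at the point (lam, z). -/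
noncomputable def specPB (g : ℕ) (F G : (Fin g → ℝ) → (Fin g → ℝ) → ℝ)
    (lam z : Fin g → ℝ) : ℝ :=
  ∑ j : Fin g, z j *
    (deriv (fun u => F (Function.update lam j u) z) (lam j)
        * deriv (fun u => G lam (Function.update z j u)) (z j)
      - deriv (fun u => F lam (Function.update z j u)) (z j)
        * deriv (fun u => G (Function.update lam j u) z) (lam j))


open Finset Function Topology

section

variable {g : ℕ}

noncomputable def nodalWithout (lam : Fin g → ℝ) (k : Fin g) (x : ℝ) : ℝ :=
  ∏ m ∈ univ.erase k, (x - lam m)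

noncomputable def specAtLagrange (a0 : ℝ) (lam z : Fin g → ℝ) (σ : ℝ) : ℝ :=
  a0 * ∏ m, (σ - lam m)
    + ∑ j, z j / (nodalWithout lam j (lam j) * lam j) * nodalWithout lam j σ

lemma prod_sub_eq_mul_nodalWithout (lam : Fin g → ℝ) (k : Fin g) (x : ℝ) :
    ∏ m, (x - lam m) = (x - lam k) * nodalWithout lam k x :=
  (mul_prod_erase univ (fun m => x - lam m) (mem_univ k)).symm

lemma nodalWithout_eq_mul_of_ne (lam : Fin g → ℝ) {j k : Fin g} (hjk : j ≠ k) (x : ℝ) :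
    nodalWithout lam k x = (x - lam j) * ∏ m ∈ (univ.erase j).erase k, (x - lam m) := by
  rw [nodalWithout, erase_right_comm]
  exact (mul_prod_erase _ (fun m => x - lam m) (mem_erase.2 ⟨hjk, mem_univ j⟩)).symm

lemma nodalWithout_update_self (lam : Fin g → ℝ) (k : Fin g) (u x : ℝ) :
    nodalWithout (update lam k u) k x = nodalWithout lam k x :=
  prod_congr rfl fun m hm => by rw [update_of_ne (ne_of_mem_erase hm)]

lemma nodalWithout_update_of_ne (lam : Fin g → ℝ) {j k : Fin g} (hjk : j ≠ k) (u x : ℝ) :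
    nodalWithout (update lam k u) j x = (x - u) * ∏ m ∈ (univ.erase j).erase k, (x - lam m) := by
  rw [nodalWithout, ← mul_prod_erase _ _ (mem_erase.2 ⟨hjk.symm, mem_univ k⟩), update_self]
  exact congrArg _ (prod_congr rfl fun m hm => by rw [update_of_ne (ne_of_mem_erase hm)])

lemma specBf_update (b0 : ℝ) (lam : Fin g → ℝ) (k : Fin g) (u σ : ℝ) :
    specBf g b0 (update lam k u) σ = b0 * ((σ - u) * nodalWithout lam k σ) := by
  rw [specBf, prod_sub_eq_mul_nodalWithout _ k, update_self, nodalWithout_update_self]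

lemma specBderiv_eq (b0 : ℝ) (lam : Fin g → ℝ) (j : Fin g) :
    specBderiv g b0 lam j = b0 * nodalWithout lam j (lam j) := by
  have hB : specBf g b0 lam = fun x => b0 * ((x - lam j) * nodalWithout lam j x) := by
    funext x
    rw [specBf, prod_sub_eq_mul_nodalWithout _ j]
  have hN : DifferentiableAt ℝ (nodalWithout lam j) (lam j) := by
    unfold nodalWithout
    fun_prop
  rw [specBderiv, hB,
    ((((hasDerivAt_id' _).sub_const (lam j)).fun_mul hN.hasDerivAt).const_mul b0).deriv]
  simp

lemma specAt_eq_specAtLagrange (a0 : ℝ) {b0 : ℝ} (hb0 : b0 ≠ 0) (lam z : Fin g → ℝ) {σ : ℝ}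
    (hσ : ∀ j, σ ≠ lam j) :
    specAt g b0 a0 lam z σ = specAtLagrange a0 lam z σ := by
  rw [specAt, specAtLagrange, add_mul, sum_mul, specBf]
  congr 1
  · field_simp
  · refine sum_congr rfl fun j _ => ?_
    have hσj : σ - lam j ≠ 0 := sub_ne_zero.2 (hσ j)
    rw [specBderiv_eq, prod_sub_eq_mul_nodalWithout _ j]
    -- if `N_j(λ_j) λ_j = 0`, both sides are `0` through the convention `x / 0 = 0`
    by_cases hK : nodalWithout lam j (lam j) * lam j = 0
    · rcases mul_eq_zero.1 hK with hK | hK <;> simp [hK]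
    · field_simp

lemma deriv_specAt_update_z (a0 : ℝ) {b0 : ℝ} (hb0 : b0 ≠ 0) (lam z : Fin g → ℝ) (k : Fin g)
    {σ : ℝ} (hσ : ∀ j, σ ≠ lam j) :
    deriv (fun u => specAt g b0 a0 lam (update z k u) σ) (z k)
      = nodalWithout lam k σ / (nodalWithout lam k (lam k) * lam k) := by
  simp only [specAt_eq_specAtLagrange a0 hb0 _ _ hσ, specAtLagrange,
    apply_update (fun j x => x / (nodalWithout lam j (lam j) * lam j) * nodalWithout lam j σ),
    sum_update_of_mem (mem_univ k)]
  simp only [deriv_const_add, deriv_add_const, deriv_mul_const_field, deriv_div_const, deriv_id'']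
  ring

lemma specAtLagrange_update_eq_mul_add (a0 : ℝ) (lam z : Fin g → ℝ) (k : Fin g) :
    ∃ φ ψ : ℝ → ℝ, ∀ u σ, (∀ j ≠ k, u ≠ lam j) →
      specAtLagrange a0 (update lam k u) z σ = φ u * nodalWithout lam k σ + ψ σ := by
  set R : Fin g → ℝ → ℝ := fun j x => ∏ m ∈ (univ.erase j).erase k, (x - lam m)
  refine ⟨fun u => a0 * (lam k - u) + z k / (nodalWithout lam k u * u)
      + ∑ j ∈ univ.erase k, z j / ((lam j - u) * R j (lam j) * lam j),
    fun σ => a0 * (σ - lam k) * nodalWithout lam k σ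
      + ∑ j ∈ univ.erase k, z j / (R j (lam j) * lam j) * R j σ, fun u σ hu => ?_⟩
  have hterm : ∀ j ∈ univ.erase k,
      z j / (nodalWithout (update lam k u) j (update lam k u j) * update lam k u j)
          * nodalWithout (update lam k u) j σ
        = z j / ((lam j - u) * R j (lam j) * lam j) * nodalWithout lam k σ
          + z j / (R j (lam j) * lam j) * R j σ := by
    intro j hj
    have hjk := ne_of_mem_erase hj
    have hd : lam j - u ≠ 0 := sub_ne_zero.2 (hu j hjk).symm
    -- `(σ - u) R_j(σ) = (σ - λ_j) R_j(σ) + (λ_j - u) R_j(σ)` and `(σ - λ_j) R_j(σ) = N_k(σ)`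
    rw [update_of_ne hjk, nodalWithout_update_of_ne _ hjk, nodalWithout_update_of_ne _ hjk,
      nodalWithout_eq_mul_of_ne _ hjk]
    by_cases hK : R j (lam j) * lam j = 0
    · rcases mul_eq_zero.1 hK with hK | hK <;> simp [R, hK]
    · field_simp
      ring
  rw [specAtLagrange, ← add_sum_erase _ _ (mem_univ k), sum_congr rfl hterm, sum_add_distrib,
    ← sum_mul, prod_sub_eq_mul_nodalWithout _ k, update_self, nodalWithout_update_self,
    nodalWithout_update_self]
  ring

lemma exists_deriv_specAt_update_lam_eq_mul (a0 : ℝ) {b0 : ℝ} (hb0 : b0 ≠ 0)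
    {lam : Fin g → ℝ} (hinj : Injective lam) (z : Fin g → ℝ) (k : Fin g) :
    ∃ c, ∀ σ, (∀ j, σ ≠ lam j) →
      deriv (fun u => specAt g b0 a0 (update lam k u) z σ) (lam k)
        = c * nodalWithout lam k σ := by
  obtain ⟨φ, ψ, hφψ⟩ := specAtLagrange_update_eq_mul_add a0 lam z k
  refine ⟨deriv φ (lam k), fun σ hσ => ?_⟩
  have hnodes : ∀ᶠ u in 𝓝 (lam k), ∀ j ≠ k, u ≠ lam j :=
    Filter.eventually_all.2 fun j =>
      if hjk : j = k then .of_forall fun _ h => absurd hjk h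
      else (eventually_ne_nhds (hinj.ne hjk).symm).mono fun _ hu _ => hu
  have hdecomp : (fun u => specAt g b0 a0 (update lam k u) z σ)
      =ᶠ[𝓝 (lam k)] fun u => φ u * nodalWithout lam k σ + ψ σ := by
    filter_upwards [hnodes, eventually_ne_nhds (hσ k).symm] with u hu huσ
    rw [specAt_eq_specAtLagrange a0 hb0 _ _ fun j => ?_, hφψ u σ hu]
    rcases eq_or_ne j k with rfl | hjk
    · simpa using huσ.symm
    · simpa [update_of_ne hjk] using hσ j
  rw [hdecomp.deriv_eq, deriv_add_const, deriv_mul_const_field]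

lemma deriv_specBf_update_lam (b0 : ℝ) (lam : Fin g → ℝ) (k : Fin g) (σ : ℝ) :
    deriv (fun u => specBf g b0 (update lam k u) σ) (lam k) = -b0 * nodalWithout lam k σ := by
  simp only [specBf_update]
  rw [((((hasDerivAt_id' _).const_sub σ).mul_const _).const_mul b0).deriv]
  ring

lemma specBf_mul_specAtLagrange_sub (b0 a0 : ℝ) (lam z : Fin g → ℝ) (s t : ℝ) :
    specBf g b0 lam s * specAtLagrange a0 lam z t - specAtLagrange a0 lam z s * specBf g b0 lam t
      = (s - t) * ∑ j, z j * (nodalWithout lam j s / (nodalWithout lam j (lam j) * lam j)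
          * (b0 * nodalWithout lam j t)) := by
  have hterm : ∀ j, b0 * (∏ m, (s - lam m))
        * (z j / (nodalWithout lam j (lam j) * lam j) * nodalWithout lam j t)
      - z j / (nodalWithout lam j (lam j) * lam j) * nodalWithout lam j s
        * (b0 * ∏ m, (t - lam m))
      = (s - t) * (z j * (nodalWithout lam j s / (nodalWithout lam j (lam j) * lam j)
          * (b0 * nodalWithout lam j t))) := fun j => by
    rw [prod_sub_eq_mul_nodalWithout _ j, prod_sub_eq_mul_nodalWithout _ j]
    ring
  rw [specBf, specBf, specAtLagrange, specAtLagrange, mul_sum,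
    sum_congr rfl fun j _ => (hterm j).symm, sum_sub_distrib, ← mul_sum, ← sum_mul]
  ring

end

theorem spectral_darboux_quadratic_poisson_algebra_general (g : ℕ) (b0 a0 : ℝ) (hb0 : b0 ≠ 0)
    (lam z : Fin g → ℝ) (hinj : Function.Injective lam)
    (s t : ℝ) (hs : ∀ j, s ≠ lam j) (ht : ∀ j, t ≠ lam j) :
    specPB g (fun l w => specAt g b0 a0 l w s) (fun l w => specAt g b0 a0 l w t) lam z = 0 ∧
    specPB g (fun l _ => specBf g b0 l s) (fun l _ => specBf g b0 l t) lam z = 0 ∧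
    (s - t) * specPB g (fun l w => specAt g b0 a0 l w s) (fun l _ => specBf g b0 l t) lam z
      = specBf g b0 lam s * specAt g b0 a0 lam z t
        - specAt g b0 a0 lam z s * specBf g b0 lam t := by
  refine ⟨sum_eq_zero fun k _ => ?_, sum_eq_zero fun k _ => by simp, ?_⟩
  · obtain ⟨c, hc⟩ := exists_deriv_specAt_update_lam_eq_mul a0 hb0 hinj z k
    rw [hc s hs, hc t ht, deriv_specAt_update_z a0 hb0 lam z k hs,
      deriv_specAt_update_z a0 hb0 lam z k ht]
    ring
  · rw [specAt_eq_specAtLagrange a0 hb0 lam z hs, specAt_eq_specAtLagrange a0 hb0 lam z ht,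
      specBf_mul_specAtLagrange_sub, specPB]
    refine congrArg _ (sum_congr rfl fun k _ => ?_)
    rw [deriv_specAt_update_z a0 hb0 lam z k hs, deriv_specBf_update_lam, deriv_const]
    ring

/-- the quadratic Poisson algebra of Ã and B:
{Ã(λ), Ã(μ)} = 0, {B(λ), B(μ)} = 0 and
(λ − μ){Ã(λ), B(μ)} = B(λ)Ã(μ) − Ã(λ)B(μ). -/
theorem spectral_darboux_quadratic_poisson_algebra (g : ℕ) (hg : 1 ≤ g)
    (b0 a0 : ℝ) (hb0 : b0 ≠ 0)
    (lam z : Fin g → ℝ) (hinj : Function.Injective lam)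
    (hlam0 : ∀ j, lam j ≠ 0) (hz : ∀ j, z j ≠ 0)
    (s t : ℝ) (hst : s ≠ t) (hs : ∀ j, s ≠ lam j) (ht : ∀ j, t ≠ lam j) :
    specPB g (fun l w => specAt g b0 a0 l w s) (fun l w => specAt g b0 a0 l w t) lam z = 0 ∧
    specPB g (fun l _ => specBf g b0 l s) (fun l _ => specBf g b0 l t) lam z = 0 ∧
    (s - t) * specPB g (fun l w => specAt g b0 a0 l w s) (fun l _ => specBf g b0 l t) lam z
      = specBf g b0 lam s * specAt g b0 a0 lam z t
        - specAt g b0 a0 lam z s * specBf g b0 lam t :=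
  spectral_darboux_quadratic_poisson_algebra_general g b0 a0 hb0 lam z hinj s t hs ht
end
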